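/- Let A be an n×n real matrix such that there exists a positive diagonal matrix D₀ with Sym(D₀A) := (D₀A + AᵀD₀)/2 negative definite (A is diagonally stable). If θ ∈ (0, π/2) satisfies tan θ > ‖Skew(D₀A)‖ · ‖(Sym(D₀A))^{-1}‖, then the matrix W(A, D₀) = [[2 sinθ Sym(D₀A), 2 cosθ Skew(D₀A)],[2 cosθ Skew(D₀A)ᵀ, 2 sinθ Sym(D₀A)]] is negative definite. -/

import Mathlib

open Real Matrix

/-- The operator (spectral) norm of a real matrix, induced by the Euclidean norm. -/
noncomputable def opNorm {n : ℕ} (A : Matrix (Fin n) (Fin n) ℝ) : ℝ :=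
  ‖Matrix.toEuclideanCLM (𝕜 := ℝ) (n := Fin n) A‖

/-- Symmetric part of a matrix. -/
noncomputable def symPart {n : ℕ} (M : Matrix (Fin n) (Fin n) ℝ) :
    Matrix (Fin n) (Fin n) ℝ := (2 : ℝ)⁻¹ • (M + Mᵀ)

/-- Skew-symmetric part of a matrix. -/
noncomputable def skewPart {n : ℕ} (M : Matrix (Fin n) (Fin n) ℝ) :
    Matrix (Fin n) (Fin n) ℝ := (2 : ℝ)⁻¹ • (M - Mᵀ)

/-!
Write `P = -Sym(D₀A)` (positive definite) and `K = Skew(D₀A)`. The quadratic form of `-W` at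
`(u, v)` is `2 sin θ (uᵀPu + vᵀPv) - 4 cos θ uᵀKv`. Cauchy–Schwarz for the form of `P` gives
`‖u‖² ≤ ‖P⁻¹‖ uᵀPu`, and `|uᵀKv| ≤ ‖K‖ ‖u‖ ‖v‖ ≤ ‖K‖ (‖u‖² + ‖v‖²) / 2`, so `‖P⁻¹‖` times the form is
at least `2 (sin θ - cos θ ‖K‖ ‖P⁻¹‖) (‖u‖² + ‖v‖²)`, which is positive since `tan θ > ‖K‖ ‖P⁻¹‖`.
-/

open WithLp

namespace Matrix

variable {ι : Type*} [Fintype ι]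

lemma norm_toLp_sq (x : ι → ℝ) : ‖toLp 2 x‖ ^ 2 = x ⬝ᵥ x := by
  rw [EuclideanSpace.real_norm_sq_eq]
  simp only [dotProduct, sq]

lemma norm_toLp_sumElim_sq {κ : Type*} [Fintype κ] (u : ι → ℝ) (v : κ → ℝ) :
    ‖toLp 2 (Sum.elim u v)‖ ^ 2 = ‖toLp 2 u‖ ^ 2 + ‖toLp 2 v‖ ^ 2 := by
  simp only [norm_toLp_sq, sumElim_dotProduct_sumElim]

variable [DecidableEq ι]

lemma PosSemidef.dotProduct_mulVec_sq_le {P : Matrix ι ι ℝ} (hP : P.PosSemidef) (x y : ι → ℝ) :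
    (x ⬝ᵥ P *ᵥ y) ^ 2 ≤ (x ⬝ᵥ P *ᵥ x) * (y ⬝ᵥ P *ᵥ y) := by
  obtain ⟨B, rfl⟩ : ∃ B : Matrix ι ι ℝ, P = Bᴴ * B := by
    open scoped MatrixOrder Matrix.Norms.L2Operator in
    exact CStarAlgebra.nonneg_iff_eq_star_mul_self.mp hP.nonneg
  have hgram (a b : ι → ℝ) : a ⬝ᵥ (Bᴴ * B) *ᵥ b = (B *ᵥ a) ⬝ᵥ (B *ᵥ b) := by
    rw [← mulVec_mulVec, dotProduct_mulVec, conjTranspose_eq_transpose_of_trivial,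
      vecMul_transpose]
  rw [hgram, hgram, hgram]
  simpa only [dotProduct, sq] using
    Finset.sum_mul_sq_le_sq_mul_sq Finset.univ (B *ᵥ x) (B *ᵥ y)

lemma abs_dotProduct_mulVec_le (M : Matrix ι ι ℝ) (x y : ι → ℝ) :
    |x ⬝ᵥ M *ᵥ y| ≤ ‖toEuclideanCLM (𝕜 := ℝ) M‖ * (‖toLp 2 x‖ * ‖toLp 2 y‖) := by
  rw [← inner_toEuclideanCLM M (toLp 2 x) (toLp 2 y)]
  calc _ ≤ ‖toLp 2 x‖ * ‖toEuclideanCLM (𝕜 := ℝ) M (toLp 2 y)‖ := abs_real_inner_le_norm _ _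
    _ ≤ ‖toLp 2 x‖ * (‖toEuclideanCLM (𝕜 := ℝ) M‖ * ‖toLp 2 y‖) := by
      gcongr; exact (toEuclideanCLM (𝕜 := ℝ) (n := ι) M).le_opNorm _
    _ = _ := by ring

lemma PosDef.norm_toLp_sq_le {P : Matrix ι ι ℝ} (hP : P.PosDef) (x : ι → ℝ) :
    ‖toLp 2 x‖ ^ 2 ≤ ‖toEuclideanCLM (𝕜 := ℝ) P⁻¹‖ * (x ⬝ᵥ P *ᵥ x) := by
  set c := ‖toEuclideanCLM (𝕜 := ℝ) P⁻¹‖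
  have hPx : 0 ≤ x ⬝ᵥ P *ᵥ x := by simpa using hP.posSemidef.dotProduct_mulVec_nonneg x
  have hPy : P *ᵥ (P⁻¹ *ᵥ x) = x := by
    rw [mulVec_mulVec, mul_nonsing_inv _ (isUnit_iff_isUnit_det _ |>.mp hP.isUnit), one_mulVec]
  -- Cauchy–Schwarz for the form of `P` at `x` and `P⁻¹ x`.
  have hcs := hP.posSemidef.dotProduct_mulVec_sq_le x (P⁻¹ *ᵥ x)
  rw [hPy, ← norm_toLp_sq, dotProduct_comm (P⁻¹ *ᵥ x)] at hcs
  have hinv : x ⬝ᵥ P⁻¹ *ᵥ x ≤ c * ‖toLp 2 x‖ ^ 2 := by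
    simpa [sq] using (le_abs_self _).trans (abs_dotProduct_mulVec_le P⁻¹ x x)
  rcases (norm_nonneg (toLp 2 x)).eq_or_lt with h | h
  · rw [← h, zero_pow two_ne_zero]
    exact mul_nonneg (norm_nonneg _) hPx
  · nlinarith [pow_pos h 2]

lemma sumElim_dotProduct_fromBlocks_mulVec {l m α : Type*} [Fintype l] [Fintype m]
    [CommRing α] (A : Matrix l l α) (B : Matrix l m α) (C : Matrix m l α) (D : Matrix m m α)
    (u : l → α) (v : m → α) :
    Sum.elim u v ⬝ᵥ fromBlocks A B C D *ᵥ Sum.elim u v =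
      u ⬝ᵥ A *ᵥ u + u ⬝ᵥ B *ᵥ v + (v ⬝ᵥ C *ᵥ u + v ⬝ᵥ D *ᵥ v) := by
  rw [fromBlocks_mulVec, Sum.elim_comp_inl, Sum.elim_comp_inr, sumElim_dotProduct_sumElim,
    dotProduct_add, dotProduct_add]

lemma inv_neg {α : Type*} [CommRing α] (A : Matrix ι ι α) : (-A)⁻¹ = -A⁻¹ := by
  by_cases h : IsUnit A.det
  · exact inv_eq_left_inv (by rw [neg_mul_neg, nonsing_inv_mul _ h])
  · have h' : ¬IsUnit (-A).det := by
      rwa [det_neg, IsUnit.mul_iff, and_iff_right ((isUnit_neg_one (α := α)).pow _)]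
    rw [nonsing_inv_apply_not_isUnit _ h, nonsing_inv_apply_not_isUnit _ h', neg_zero]

lemma PosDef.fromBlocks_smul {P K : Matrix ι ι ℝ} (hP : P.PosDef) {a b : ℝ}
    (hab : |b| * ‖toEuclideanCLM (𝕜 := ℝ) K‖ * ‖toEuclideanCLM (𝕜 := ℝ) P⁻¹‖ < a) :
    (fromBlocks (a • P) (b • K) (b • Kᵀ) (a • P)).PosDef := by
  refine .of_dotProduct_mulVec_pos ?_ fun z hz ↦ ?_
  · have hPt : Pᵀ = P := by
      simpa only [conjTranspose_eq_transpose_of_trivial] using hP.isHermitian.eq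
    rw [IsHermitian, conjTranspose_eq_transpose_of_trivial, fromBlocks_transpose]
    simp only [transpose_smul, transpose_transpose, hPt]
  obtain ⟨u, v, rfl⟩ : ∃ u v, z = Sum.elim u v :=
    ⟨z ∘ Sum.inl, z ∘ Sum.inr, (Sum.elim_comp_inl_inr z).symm⟩
  have hnorm : 0 < ‖toLp 2 u‖ ^ 2 + ‖toLp 2 v‖ ^ 2 := by
    have : toLp 2 (Sum.elim u v) ≠ 0 := by simpa using hz
    rw [← norm_toLp_sumElim_sq]
    positivity
  rw [star_trivial, sumElim_dotProduct_fromBlocks_mulVec]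
  simp only [smul_mulVec, dotProduct_smul, smul_eq_mul, dotProduct_transpose_mulVec]
  have hu := hP.norm_toLp_sq_le u
  have hv := hP.norm_toLp_sq_le v
  have huv := abs_dotProduct_mulVec_le K u v
  set k := ‖toEuclideanCLM (𝕜 := ℝ) K‖
  set c := ‖toEuclideanCLM (𝕜 := ℝ) P⁻¹‖
  set x := ‖toLp 2 u‖
  set y := ‖toLp 2 v‖
  have hc : 0 ≤ c := norm_nonneg _
  have hbkc : 0 ≤ |b| * k * c := by positivity
  have hP_form : a * (x ^ 2 + y ^ 2) ≤ c * (a * (u ⬝ᵥ P *ᵥ u + v ⬝ᵥ P *ᵥ v)) := by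
    nlinarith [hbkc.trans hab.le]
  have hK_form : -(c * (|b| * (k * (x * y)))) ≤ c * (b * (u ⬝ᵥ K *ᵥ v)) := by
    have : |b * (u ⬝ᵥ K *ᵥ v)| ≤ |b| * (k * (x * y)) := by
      rw [abs_mul]
      gcongr
    nlinarith [(abs_le.mp this).1]
  -- Multiplying by `c` instead of dividing avoids a case split on `c = 0`.
  refine pos_of_mul_pos_right (a := c) ?_ hc
  nlinarith [mul_le_mul_of_nonneg_left (two_mul_le_add_sq x y) hbkc,
    mul_pos (sub_pos.mpr hab) hnorm]

end Matrix

theorem diagonally_stable_implies_sector_stable_general (n : ℕ) (A : Matrix (Fin n) (Fin n) ℝ)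
    (d₀ : Fin n → ℝ)
    (hSym : (-(symPart (Matrix.diagonal d₀ * A))).PosDef)
    (θ : ℝ) (hθ₀ : 0 < θ) (hθ : θ < π / 2)
    (htan : Real.tan θ >
      opNorm (skewPart (Matrix.diagonal d₀ * A)) *
        opNorm (symPart (Matrix.diagonal d₀ * A))⁻¹) :
    (-(Matrix.fromBlocks
        ((2 * Real.sin θ) • symPart (Matrix.diagonal d₀ * A))
        ((2 * Real.cos θ) • skewPart (Matrix.diagonal d₀ * A))
        ((2 * Real.cos θ) • (skewPart (Matrix.diagonal d₀ * A))ᵀ)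
        ((2 * Real.sin θ) • symPart (Matrix.diagonal d₀ * A)))).PosDef := by
  have hcos : 0 < cos θ := cos_pos_of_mem_Ioo ⟨by linarith [pi_pos], hθ⟩
  rw [fromBlocks_neg, ← smul_neg, ← neg_smul, ← neg_smul]
  refine hSym.fromBlocks_smul ?_
  rw [Matrix.inv_neg, map_neg, norm_neg, abs_neg, abs_of_pos (by positivity)]
  rw [tan_eq_sin_div_cos, gt_iff_lt, lt_div_iff₀ hcos] at htan
  change 2 * cos θ * opNorm _ * opNorm _ < 2 * sin θ
  nlinarith

theorem diagonally_stable_implies_sector_stable (n : ℕ) (A : Matrix (Fin n) (Fin n) ℝ)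
    (d₀ : Fin n → ℝ) (hd₀ : ∀ i, 0 < d₀ i)
    (hSym : (-(symPart (Matrix.diagonal d₀ * A))).PosDef)
    (θ : ℝ) (hθ₀ : 0 < θ) (hθ : θ < π / 2)
    (htan : Real.tan θ >
      opNorm (skewPart (Matrix.diagonal d₀ * A)) *
        opNorm (symPart (Matrix.diagonal d₀ * A))⁻¹) :
    (-(Matrix.fromBlocks
        ((2 * Real.sin θ) • symPart (Matrix.diagonal d₀ * A))
        ((2 * Real.cos θ) • skewPart (Matrix.diagonal d₀ * A))
        ((2 * Real.cos θ) • (skewPart (Matrix.diagonal d₀ * A))ᵀ)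
        ((2 * Real.sin θ) • symPart (Matrix.diagonal d₀ * A)))).PosDef :=
  diagonally_stable_implies_sector_stable_general n A d₀ hSym θ hθ₀ hθ htan
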